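/- Let G be a cofinitary group, r ∈ 2^ω, T ∈ I_i(G)^+, t ∈ T, and (s,E) a condition of Z_G(r). Then there exist a condition (s',E) of Z_G(r) with (s',E) ≤ (s,E), an element t' ∈ T with t ⊆ t', and k ∈ dom(t') \ dom(t) such that t'(k) = s'(k). -/

import Mathlib

noncomputable section

/-- Permutations of the natural numbers (elements of `S_∞`). -/
abbrev Perm' := Equiv.Perm ℕ

/-- A letter of a word over `G ∪ {x, x⁻¹}`: either a group element (of `S_∞`),
or `Sum.inr true` standing for `x`, or `Sum.inr false` standing for `x⁻¹`. -/
abbrev Letter := Perm' ⊕ Bool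

/-- A word is a list of letters, written left to right
(the leftmost letter is applied last). -/
abbrev Word := List Letter

/-- A subgroup of `S_∞` is cofinitary if every non-identity element
has only finitely many fixed points. -/
def Cofinitary (G : Subgroup Perm') : Prop :=
  ∀ g ∈ G, g ≠ 1 → {n : ℕ | g n = n}.Finite

/-- A set of pairs is a partial injection (functional and injective). -/
def PartInj (s : Set (ℕ × ℕ)) : Prop :=
  (∀ ⦃a b c⦄, (a, b) ∈ s → (a, c) ∈ s → b = c) ∧
  (∀ ⦃a b c⦄, (a, c) ∈ s → (b, c) ∈ s → a = b)

/-- Domain of a partial injection given as a set of pairs. -/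
def pdom (s : Set (ℕ × ℕ)) : Set ℕ := Prod.fst '' s

/-- Range of a partial injection given as a set of pairs. -/
def pran (s : Set (ℕ × ℕ)) : Set ℕ := Prod.snd '' s

/-- The relation given by substituting the partial injection `s` for `x`
(and `s⁻¹` for `x⁻¹`) in a single letter. -/
def letterRel (s : Set (ℕ × ℕ)) : Letter → ℕ → ℕ → Prop
  | Sum.inl g => fun a b => g a = b
  | Sum.inr true => fun a b => (a, b) ∈ s
  | Sum.inr false => fun a b => (b, a) ∈ s

/-- The relation `w[s]`: evaluation of a word at the partial injection `s`,
composing the letter relations (rightmost letter applied first). -/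
def wordRel (s : Set (ℕ × ℕ)) : Word → ℕ → ℕ → Prop
  | [] => fun a b => a = b
  | l :: w => fun a b => ∃ c, wordRel s w a c ∧ letterRel s l c b

/-- `fix(w[s])`, the set of fixed points of the partial injection `w[s]`. -/
def wordFix (s : Set (ℕ × ℕ)) (w : Word) : Set ℕ := {n | wordRel s w n n}

/-- The word `x^k` for an integer `k` (for `k < 0`, `|k|` copies of `x⁻¹`). -/
def xpow (k : ℤ) : Word :=
  if 0 ≤ k then List.replicate k.toNat (Sum.inr true : Letter)
  else List.replicate (-k).toNat (Sum.inr false : Letter)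

/-- The block `g x^k` as a word. -/
def blockWord (p : Perm' × ℤ) : Word := Sum.inl p.1 :: xpow p.2

/-- `w` is a nice word (member of `W*_G`): `w = x^{k₀}` with `k₀ > 0`, or
`w = g_l x^{k_l} ⋯ g₁ x^{k₁} g₀ x^{k₀}` with `k₀ > 0`, all `k_i ≠ 0` and all
`g_i ∈ G \ {id}`. -/
def IsNice (G : Subgroup Perm') (w : Word) : Prop :=
  (∃ k : ℕ, 0 < k ∧ w = xpow (k : ℤ)) ∨
  (∃ bs : List (Perm' × ℤ), bs ≠ [] ∧
    (∀ p ∈ bs, p.1 ∈ G ∧ p.1 ≠ 1 ∧ p.2 ≠ 0) ∧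
    (∃ p, bs.getLast? = some p ∧ 0 < p.2) ∧
    w = (bs.map blockWord).flatten)

/-- The number of occurrences of `x` or `x⁻¹` in a word. -/
def xOccurrences (w : Word) : ℕ := w.countP (fun l => l.isRight)

/-- `w ∈ W¹_G`: a nice word with exactly one occurrence of `x` or `x⁻¹`. -/
def IsNiceOne (G : Subgroup Perm') (w : Word) : Prop :=
  IsNice G w ∧ xOccurrences w = 1

/-- `(s, E)` is a condition of Zhang's forcing `Z_G`: `s` is a finite partial
injection and `E` a finite set of nice words. -/
def ZCond (G : Subgroup Perm') (s : Set (ℕ × ℕ)) (E : Set Word) : Prop :=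
  s.Finite ∧ PartInj s ∧ E.Finite ∧ ∀ w ∈ E, IsNice G w

/-- `(t, F) ≤ (s, E)` in Zhang's forcing: `s ⊆ t`, `E ⊆ F`, and
`fix(w[t]) = fix(w[s])` for every `w ∈ E`. -/
def ZLe (t : Set (ℕ × ℕ)) (F : Set Word) (s : Set (ℕ × ℕ)) (E : Set Word) : Prop :=
  s ⊆ t ∧ E ⊆ F ∧ ∀ w ∈ E, wordFix t w = wordFix s w

/-- An injective tree: a nonempty set of finite sequences closed under initial
segments, all of whose elements are injective sequences. -/
def IsInjTree (T : Set (List ℕ)) : Prop :=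
  T.Nonempty ∧ (∀ t ∈ T, ∀ s : List ℕ, s <+: t → s ∈ T) ∧ ∀ t ∈ T, t.Nodup

/-- `T ∈ I_i(P)⁺`: an injective tree such that for every `s ∈ T` and every
finite `P₀ ⊆ P` there are `t ∈ T` extending `s` and `k ∈ dom(t) \ dom(s)` with
`t(k) ≠ f(k)` for all `f ∈ P₀`. -/
def TreePos (P : Set Perm') (T : Set (List ℕ)) : Prop :=
  IsInjTree T ∧
  ∀ s ∈ T, ∀ P₀ ⊆ P, P₀.Finite →
    ∃ t ∈ T, s <+: t ∧ ∃ k, s.length ≤ k ∧ k < t.length ∧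
      ∀ f ∈ P₀, t.getD k 0 ≠ f k

/-- A set `O` is closed under a relation `R` and its inverse. -/
def RelClosed (R : ℕ → ℕ → Prop) (O : Set ℕ) : Prop :=
  ∀ a b, R a b → (a ∈ O ↔ b ∈ O)

/-- The orbit of `n` under the (partial injective) relation `R`: the smallest
set containing `n` closed under applications of `R` and `R⁻¹`. -/
def relOrbit (R : ℕ → ℕ → Prop) (n : ℕ) : Set ℕ :=
  ⋂₀ {O : Set ℕ | n ∈ O ∧ RelClosed R O}

/-- The set of all orbits of the relation `R`. -/
def relOrbits (R : ℕ → ℕ → Prop) : Set (Set ℕ) := {O | ∃ n, O = relOrbit R n}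

/-- Domain of a relation. -/
def relDom (R : ℕ → ℕ → Prop) : Set ℕ := {a | ∃ b, R a b}

/-- Range of a relation. -/
def relRan (R : ℕ → ℕ → Prop) : Set ℕ := {b | ∃ a, R a b}

/-- The set of closed orbits of `R`: those orbits contained in `dom ∩ ran`. -/
def relClosedOrbits (R : ℕ → ℕ → Prop) : Set (Set ℕ) :=
  {O ∈ relOrbits R | O ⊆ relDom R ∩ relRan R}

/-- The relation of a partial injection given as a set of pairs. -/
def sRel (s : Set (ℕ × ℕ)) : ℕ → ℕ → Prop := fun a b => (a, b) ∈ s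

/-- The relation (graph) of a permutation of `ℕ`. -/
def permRel (f : Perm') : ℕ → ℕ → Prop := fun a b => f a = b

/-- A partial injection `s` is nice: every closed orbit has its minimum below
the minimum of the complement of the union of all closed orbits. -/
def NiceInj (s : Set (ℕ × ℕ)) : Prop :=
  ∀ O ∈ relClosedOrbits (sRel s),
    sInf O < sInf {n : ℕ | n ∉ ⋃₀ relClosedOrbits (sRel s)}

/-- The position of a closed orbit `O` of `s` in the well-order of closed
orbits by their minima. -/
def orbitIndex (s : Set (ℕ × ℕ)) (O : Set ℕ) : ℕ :=
  {P ∈ relClosedOrbits (sRel s) | sInf P < sInf O}.ncard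

/-- `s` codes `r`, i.e. `o_s ⊆ r`: the `n`-th closed orbit (in the well-order
by minima) has cardinality congruent to `r(n)` mod 2. -/
def CodesReal (s : Set (ℕ × ℕ)) (r : ℕ → Fin 2) : Prop :=
  ∀ O ∈ relClosedOrbits (sRel s), O.ncard % 2 = (r (orbitIndex s O) : ℕ)

/-- `(s, E)` is a condition of `Z_G(r)`. -/
def ZrCond (G : Subgroup Perm') (r : ℕ → Fin 2)
    (s : Set (ℕ × ℕ)) (E : Set Word) : Prop :=
  ZCond G s E ∧ NiceInj s ∧ CodesReal s r

/-- The `n`-th prime. -/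
def pPrime (n : ℕ) : ℕ := Nat.nth Nat.Prime n

/-- The orbit-coding function `o†`: `o†(n)` is the number of closed orbits of
`R` of cardinality `p_n`, modulo 2. -/
def odag (R : ℕ → ℕ → Prop) (n : ℕ) : ℕ :=
  {O ∈ relClosedOrbits R | O.ncard = pPrime n}.ncard % 2

/-- `v^k`: the word `v` concatenated `k` times. -/
def wpow (v : Word) (k : ℕ) : Word := (List.replicate k v).flatten

/-- `w ∈ W†_G`: a nice word that is indecomposable, i.e. not of the form `v^k`
for a nice word `v` and `k > 1`. -/
def Indecomposable (G : Subgroup Perm') (w : Word) : Prop :=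
  IsNice G w ∧ ¬∃ v : Word, IsNice G v ∧ ∃ k : ℕ, 1 < k ∧ w = wpow v k

/-- The inverse of a letter. -/
def letterInv : Letter → Letter
  | Sum.inl g => Sum.inl g⁻¹
  | Sum.inr b => Sum.inr (!b)

/-- The inverse of a word. -/
def wordInv (w : Word) : Word := (w.map letterInv).reverse

/-- `E` is closed under cyclic permutations and inverses thereof within `W*_G`. -/
def CyclClosed (G : Subgroup Perm') (E : Set Word) : Prop :=
  ∀ w ∈ E, ∀ w₀ w₁ : Word, w = w₀ ++ w₁ →
    (IsNice G (w₁ ++ w₀) → w₁ ++ w₀ ∈ E) ∧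
    (IsNice G (wordInv (w₁ ++ w₀)) → wordInv (w₁ ++ w₀) ∈ E)

/-- `(s, E)` is a condition of `Z†_G(r)`: a Zhang condition such that `E` is
closed under cyclic permutations and inverses thereof in `W*_G`, and whenever
`w = v^k ∈ E` with `v ∈ W†_G` then `v^l ∈ E` for all `0 < l ≤ k` and `o†_{v[s]}`
codes `r` up to `n` for every `n` with `p_n ≤ k`. -/
def ZdagCond (G : Subgroup Perm') (r : ℕ → Fin 2)
    (s : Set (ℕ × ℕ)) (E : Set Word) : Prop :=
  ZCond G s E ∧ CyclClosed G E ∧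
  ∀ w ∈ E, ∀ v : Word, ∀ k : ℕ, Indecomposable G v → w = wpow v k →
    (∀ l : ℕ, 0 < l → l ≤ k → wpow v l ∈ E) ∧
    (∀ n : ℕ, pPrime n ≤ k → ∀ i ≤ n, odag (wordRel s v) i = (r i : ℕ))

/-- Substituting the permutation `f` for `x` in a letter. -/
def letterPerm (f : Perm') : Letter → Perm'
  | Sum.inl g => g
  | Sum.inr true => f
  | Sum.inr false => f⁻¹

/-- `w[f]`: evaluation of a word at the permutation `f`. -/
def wordPerm (f : Perm') (w : Word) : Perm' := (w.map (letterPerm f)).prod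

/-- Two functions are eventually different. -/
def EvDiff (f g : ℕ → ℕ) : Prop := {k : ℕ | f k = g k}.Finite

/-- A set of permutations is an eventually different family. -/
def EDFamily (P : Set Perm') : Prop :=
  ∀ f ∈ P, ∀ g ∈ P, f ≠ g → EvDiff f g

/-!
Extend `s` by one pair `(k, m)`, where `k` is a new position on a branch `t'` of `T` and
`m = t'(k)`. Choose `k ≠ m` outside the field of `s` such that every group letter `g` of a word
in `E` sends `k` and `m` outside the field of `s ∪ {(k, m)}`. This is possible because `G` is
cofinitary (each `g` has finitely many fixed points) and `T ∈ I_i(G)⁺` (branches are injective,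
so the value `m` can be made to avoid any finite set and to differ from `k`, `g k`, `g⁻¹ k`).

The new pair forms the orbit `{k, m}`, which is not closed, so the closed orbits of `s`, and with
them niceness and the coded real, are unchanged. A computation of `w[s ∪ {(k, m)}]` that uses the
new pair gets stuck outside the field, hence cannot return to its starting point, which lies in
the field because `w` ends in `x`; so `fix(w[·])` is unchanged.
-/

open scoped Pointwise

def pfield (s : Set (ℕ × ℕ)) : Set ℕ := pdom s ∪ pran s

section Field

variable {s : Set (ℕ × ℕ)} {a b k m : ℕ}

lemma mem_pdom_of_mem (h : (a, b) ∈ s) : a ∈ pdom s := ⟨(a, b), h, rfl⟩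

lemma mem_pran_of_mem (h : (a, b) ∈ s) : b ∈ pran s := ⟨(a, b), h, rfl⟩

lemma mem_insert_pair : (a, b) ∈ insert (k, m) s ↔ a = k ∧ b = m ∨ (a, b) ∈ s := by
  simp

lemma mem_pfield_insert :
    a ∈ pfield (insert (k, m) s) ↔ a = k ∨ a = m ∨ a ∈ pfield s := by
  simp only [pfield, pdom, pran, Set.image_insert_eq, Set.mem_union, Set.mem_insert_iff]
  tauto

end Field

lemma PartInj.insert {s : Set (ℕ × ℕ)} {k m : ℕ} (hs : PartInj s) (hk : k ∉ pdom s)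
    (hm : m ∉ pran s) : PartInj (insert (k, m) s) := by
  refine ⟨fun a b c hab hac => ?_, fun a b c hac hbc => ?_⟩
  · rcases mem_insert_pair.1 hab with ⟨ha, hb⟩ | hab <;>
      rcases mem_insert_pair.1 hac with ⟨ha', hc⟩ | hac
    · exact hb.trans hc.symm
    · exact absurd (ha ▸ mem_pdom_of_mem hac) hk
    · exact absurd (ha' ▸ mem_pdom_of_mem hab) hk
    · exact hs.1 hab hac
  · rcases mem_insert_pair.1 hac with ⟨ha, hc⟩ | hac <;>
      rcases mem_insert_pair.1 hbc with ⟨hb, hc'⟩ | hbc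
    · exact ha.trans hb.symm
    · exact absurd (hc ▸ mem_pran_of_mem hbc) hm
    · exact absurd (hc' ▸ mem_pran_of_mem hac) hm
    · exact hs.2 hac hbc

section Words

variable {s : Set (ℕ × ℕ)}

lemma wordRel_mono {t : Set (ℕ × ℕ)} (hst : s ⊆ t) :
    ∀ (w : Word) (a b : ℕ), wordRel s w a b → wordRel t w a b
  | [], _, _, h => h
  | Sum.inl _ :: w, a, _, ⟨c, hac, hcb⟩ => ⟨c, wordRel_mono hst w a c hac, hcb⟩
  | Sum.inr true :: w, a, _, ⟨c, hac, hcb⟩ => ⟨c, wordRel_mono hst w a c hac, hst hcb⟩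
  | Sum.inr false :: w, a, _, ⟨c, hac, hcb⟩ => ⟨c, wordRel_mono hst w a c hac, hst hcb⟩

lemma wordRel_append (u v : Word) (a b : ℕ) :
    wordRel s (u ++ v) a b ↔ ∃ c, wordRel s v a c ∧ wordRel s u c b := by
  induction u generalizing b with
  | nil => exact ⟨fun h => ⟨b, h, rfl⟩, fun ⟨c, h, hcb⟩ => hcb ▸ h⟩
  | cons l u ih =>
    simp only [List.cons_append, wordRel, ih]
    exact ⟨fun ⟨d, ⟨c, hac, hcd⟩, hdb⟩ => ⟨c, hac, d, hcd, hdb⟩,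
      fun ⟨c, hac, d, hcd, hdb⟩ => ⟨d, ⟨c, hac, hcd⟩, hdb⟩⟩

lemma xpow_eq_append_inr {e : ℤ} (he : e ≠ 0) : ∃ v β, xpow e = v ++ [Sum.inr β] := by
  unfold xpow
  split_ifs with h
  · obtain ⟨n, hn⟩ : ∃ n, e.toNat = n + 1 := Nat.exists_eq_succ_of_ne_zero (by omega)
    exact ⟨_, _, hn ▸ List.replicate_succ'⟩
  · obtain ⟨n, hn⟩ : ∃ n, (-e).toNat = n + 1 := Nat.exists_eq_succ_of_ne_zero (by omega)
    exact ⟨_, _, hn ▸ List.replicate_succ'⟩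

lemma mem_pfield_of_wordRel_append_xpow {v : Word} {e : ℤ} (he : e ≠ 0) {a b : ℕ}
    (h : wordRel s (v ++ xpow e) a b) : a ∈ pfield s := by
  obtain ⟨u, β, hu⟩ := xpow_eq_append_inr he
  rw [hu, ← List.append_assoc, wordRel_append] at h
  obtain ⟨c, ⟨a', rfl, hac⟩, -⟩ := h
  cases β
  · exact Or.inr (mem_pran_of_mem hac)
  · exact Or.inl (mem_pdom_of_mem hac)

end Words

lemma IsNice.mem_of_inl_mem {G : Subgroup Perm'} {w : Word} (hw : IsNice G w) {g : Perm'}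
    (hg : Sum.inl g ∈ w) : g ∈ G ∧ g ≠ 1 := by
  have hx : ∀ e, Sum.inl g ∉ xpow e := by
    intro e h
    unfold xpow at h
    split_ifs at h <;> simp [List.mem_replicate] at h
  rcases hw with ⟨k₀, -, rfl⟩ | ⟨bs, -, hbs, -, rfl⟩
  · exact absurd hg (hx _)
  · obtain ⟨_, hbw, hgp⟩ := List.mem_flatten.1 hg
    obtain ⟨p, hp, rfl⟩ := List.mem_map.1 hbw
    rcases List.mem_cons.1 hgp with h | h
    · obtain rfl : g = p.1 := Sum.inl_injective h
      exact ⟨(hbs p hp).1, (hbs p hp).2.1⟩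
    · exact absurd h (hx _)

def wordLetters (E : Set Word) : Set Perm' := {g | ∃ w ∈ E, Sum.inl g ∈ w}

lemma wordLetters_finite {E : Set Word} (hE : E.Finite) : (wordLetters E).Finite := by
  have : wordLetters E = ⋃ w ∈ E, Sum.inl ⁻¹' {l | l ∈ w} := by
    ext g
    simp [wordLetters]
  rw [this]
  exact hE.biUnion fun w _ => w.finite_toSet.preimage Sum.inl_injective.injOn

section Orbits

variable {R : ℕ → ℕ → Prop} {n : ℕ}

lemma mem_relOrbit_self (R : ℕ → ℕ → Prop) (n : ℕ) : n ∈ relOrbit R n :=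
  Set.mem_sInter.2 fun _ hO => hO.1

lemma relOrbit_subset {O : Set ℕ} (hn : n ∈ O) (hO : RelClosed R O) : relOrbit R n ⊆ O :=
  Set.sInter_subset_of_mem ⟨hn, hO⟩

lemma relClosed_relOrbit (R : ℕ → ℕ → Prop) (n : ℕ) : RelClosed R (relOrbit R n) :=
  fun a b hab => by
    simp only [relOrbit, Set.mem_sInter]
    exact forall₂_congr fun O hO => hO.2 a b hab

lemma RelClosed.mono {R' : ℕ → ℕ → Prop} {O : Set ℕ} (hO : RelClosed R' O)
    (h : ∀ a b, R a b → R' a b) : RelClosed R O :=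
  fun a b hab => hO a b (h a b hab)

end Orbits

section Insert

variable {s : Set (ℕ × ℕ)} {k m : ℕ}

lemma wordRel_replicate_of_letterRel_iff {s' : Set (ℕ × ℕ)} {l : Letter} {p q : ℕ}
    (hl : ∀ a b, letterRel s' l a b ↔ letterRel s l a b ∨ (a = p ∧ b = q))
    (hp : ∀ a, ¬ letterRel s l a p) (hq : ∀ b, ¬ letterRel s l q b) (hpq : p ≠ q) :
    ∀ n a b, wordRel s' (List.replicate n l) a b →
      wordRel s (List.replicate n l) a b ∨ (n = 1 ∧ a = p ∧ b = q)
  | 0, _, _, h => Or.inl h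
  | n + 1, a, b, ⟨c, hac, hcb⟩ => by
    rcases wordRel_replicate_of_letterRel_iff hl hp hq hpq n a c hac with hac | ⟨rfl, rfl, rfl⟩ <;>
      rcases (hl c b).1 hcb with hcb | ⟨rfl, rfl⟩
    · exact Or.inl ⟨c, hac, hcb⟩
    · cases n with
      | zero => exact Or.inr ⟨rfl, hac, rfl⟩
      | succ n =>
        obtain ⟨d, -, hdp⟩ := hac
        exact absurd hdp (hp d)
    · exact absurd hcb (hq b)
    · exact absurd rfl hpq

lemma wordRel_xpow_insert (hk : k ∉ pfield s) (hm : m ∉ pfield s) (hkm : k ≠ m) (e : ℤ)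
    {a b : ℕ} (h : wordRel (insert (k, m) s) (xpow e) a b) :
    wordRel s (xpow e) a b ∨ (a = k ∧ b = m) ∨ (a = m ∧ b = k) := by
  unfold xpow at h ⊢
  split_ifs at h ⊢
  · refine (wordRel_replicate_of_letterRel_iff (p := k) (q := m) ?_ ?_ ?_ hkm _ a b h).imp_right
      fun h => Or.inl h.2
    · simp [letterRel, or_comm]
    · exact fun a (h : (a, k) ∈ s) => hk (Or.inr (mem_pran_of_mem h))
    · exact fun b (h : (m, b) ∈ s) => hm (Or.inl (mem_pdom_of_mem h))
  · refine (wordRel_replicate_of_letterRel_iff (p := m) (q := k) ?_ ?_ ?_ hkm.symm _ a b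
      h).imp_right fun h => Or.inr h.2
    · simp [letterRel, or_comm, and_comm]
    · exact fun a (h : (m, a) ∈ s) => hm (Or.inl (mem_pdom_of_mem h))
    · exact fun b (h : (b, k) ∈ s) => hk (Or.inr (mem_pran_of_mem h))

lemma wordRel_blockWord_insert (hk : k ∉ pfield s) (hm : m ∉ pfield s) (hkm : k ≠ m)
    (p : Perm' × ℤ) {a b : ℕ} (h : wordRel (insert (k, m) s) (blockWord p) a b) :
    wordRel s (blockWord p) a b ∨ (a = k ∧ b = p.1 m) ∨ (a = m ∧ b = p.1 k) := by
  obtain ⟨c, hac, rfl : p.1 c = b⟩ := h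
  rcases wordRel_xpow_insert hk hm hkm p.2 hac with hac | ⟨rfl, rfl⟩ | ⟨rfl, rfl⟩
  · exact Or.inl ⟨c, hac, rfl⟩
  · exact Or.inr (Or.inl ⟨rfl, rfl⟩)
  · exact Or.inr (Or.inr ⟨rfl, rfl⟩)

/-- Once a computation has used the new pair it has left the field of the extended
injection, after which no further block can be applied. -/
lemma wordRel_blocks_insert (hk : k ∉ pfield s) (hm : m ∉ pfield s) (hkm : k ≠ m)
    {bs : List (Perm' × ℤ)}
    (hbs : ∀ p ∈ bs, p.2 ≠ 0 ∧
      p.1 k ∉ pfield (insert (k, m) s) ∧ p.1 m ∉ pfield (insert (k, m) s))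
    {a b : ℕ} (h : wordRel (insert (k, m) s) (bs.map blockWord).flatten a b) :
    wordRel s (bs.map blockWord).flatten a b ∨ b ∉ pfield (insert (k, m) s) := by
  induction bs generalizing b with
  | nil => exact Or.inl h
  | cons p bs ih =>
    have hp := hbs p List.mem_cons_self
    simp only [List.map_cons, List.flatten_cons, wordRel_append] at h ⊢
    obtain ⟨c, hac, hcb⟩ := h
    rcases ih (fun q hq => hbs q (List.mem_cons_of_mem p hq)) hac with hac | hc
    · rcases wordRel_blockWord_insert hk hm hkm p hcb with hcb | ⟨-, rfl⟩ | ⟨-, rfl⟩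
      · exact Or.inl ⟨c, hac, hcb⟩
      · exact Or.inr hp.2.2
      · exact Or.inr hp.2.1
    · exact absurd (mem_pfield_of_wordRel_append_xpow (v := [Sum.inl p.1]) hp.1 hcb) hc

lemma wordFix_insert {G : Subgroup Perm'} (hk : k ∉ pfield s) (hm : m ∉ pfield s) (hkm : k ≠ m)
    {w : Word} (hw : IsNice G w)
    (hL : ∀ g, Sum.inl g ∈ w →
      g k ∉ pfield (insert (k, m) s) ∧ g m ∉ pfield (insert (k, m) s)) :
    wordFix (insert (k, m) s) w = wordFix s w := by
  refine subset_antisymm (fun n hn => ?_) fun n => wordRel_mono (Set.subset_insert _ _) w n n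
  rcases hw with ⟨k₀, -, rfl⟩ | ⟨bs, hne, hbs, -, rfl⟩
  · rcases wordRel_xpow_insert hk hm hkm _ hn with hn | ⟨hk', hm'⟩ | ⟨hm', hk'⟩
    · exact hn
    · exact absurd (hk'.symm.trans hm') hkm
    · exact absurd (hk'.symm.trans hm') hkm
  · have hblocks : ∀ p ∈ bs, p.2 ≠ 0 ∧
        p.1 k ∉ pfield (insert (k, m) s) ∧ p.1 m ∉ pfield (insert (k, m) s) := fun p hp =>
      ⟨(hbs p hp).2.2, hL p.1 (List.mem_flatten.2 ⟨_, List.mem_map_of_mem hp, List.mem_cons_self⟩)⟩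
    refine (wordRel_blocks_insert hk hm hkm hblocks hn).resolve_right fun hout => hout ?_
    obtain ⟨bs, p, rfl⟩ := (List.eq_nil_or_concat' bs).resolve_left hne
    have hw : ((bs ++ [p]).map blockWord).flatten =
        ((bs.map blockWord).flatten ++ [Sum.inl p.1]) ++ xpow p.2 := by
      simp [blockWord]
    change wordRel _ _ n n at hn
    rw [hw] at hn
    exact mem_pfield_of_wordRel_append_xpow (hbs p (by simp)).2.2 hn

lemma relOrbit_insert_of_ne (hk : k ∉ pfield s) (hm : m ∉ pfield s) {n : ℕ} (hnk : n ≠ k)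
    (hnm : n ≠ m) : relOrbit (sRel (insert (k, m) s)) n = relOrbit (sRel s) n := by
  have hfresh : relOrbit (sRel s) n ⊆ {x | x ≠ k ∧ x ≠ m} := by
    refine relOrbit_subset ⟨hnk, hnm⟩ fun a b (hab : (a, b) ∈ s) => ?_
    have ha : a ∈ pfield s := Or.inl (mem_pdom_of_mem hab)
    have hb : b ∈ pfield s := Or.inr (mem_pran_of_mem hab)
    exact iff_of_true ⟨ne_of_mem_of_not_mem ha hk, ne_of_mem_of_not_mem ha hm⟩
      ⟨ne_of_mem_of_not_mem hb hk, ne_of_mem_of_not_mem hb hm⟩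
  refine subset_antisymm (relOrbit_subset (mem_relOrbit_self _ n) fun a b hab => ?_)
    (relOrbit_subset (mem_relOrbit_self _ n)
      ((relClosed_relOrbit _ n).mono fun a b => Set.mem_insert_of_mem _))
  rcases mem_insert_pair.1 hab with ⟨rfl, rfl⟩ | hab
  · exact iff_of_false (fun h => (hfresh h).1 rfl) (fun h => (hfresh h).2 rfl)
  · exact relClosed_relOrbit _ n a b hab

/-- `k` is not in the range and `m` not in the domain of the extended injection. -/
lemma relDom_inter_relRan_insert (hk : k ∉ pfield s) (hm : m ∉ pfield s) (hkm : k ≠ m) :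
    relDom (sRel (insert (k, m) s)) ∩ relRan (sRel (insert (k, m) s)) =
      relDom (sRel s) ∩ relRan (sRel s) := by
  refine subset_antisymm ?_ fun x ⟨⟨b, hb⟩, ⟨a, ha⟩⟩ =>
    ⟨⟨b, Set.mem_insert_of_mem _ hb⟩, ⟨a, Set.mem_insert_of_mem _ ha⟩⟩
  rintro x ⟨⟨b, hb⟩, ⟨a, ha⟩⟩
  rcases mem_insert_pair.1 hb, mem_insert_pair.1 ha with ⟨⟨rfl, -⟩ | hb', ⟨-, rfl⟩ | ha'⟩
  · exact absurd rfl hkm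
  · exact (hk (Or.inr (mem_pran_of_mem ha'))).elim
  · exact (hm (Or.inl (mem_pdom_of_mem hb'))).elim
  · exact ⟨⟨b, hb'⟩, ⟨a, ha'⟩⟩

lemma relClosedOrbits_insert (hk : k ∉ pfield s) (hm : m ∉ pfield s) (hkm : k ≠ m) :
    relClosedOrbits (sRel (insert (k, m) s)) = relClosedOrbits (sRel s) := by
  have horbit : ∀ n ∈ relDom (sRel s) ∩ relRan (sRel s),
      relOrbit (sRel (insert (k, m) s)) n = relOrbit (sRel s) n := by
    rintro n ⟨⟨b, hb⟩, -⟩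
    have hn : n ∈ pfield s := Or.inl (mem_pdom_of_mem hb)
    exact relOrbit_insert_of_ne hk hm (ne_of_mem_of_not_mem hn hk) (ne_of_mem_of_not_mem hn hm)
  ext O
  simp only [relClosedOrbits, relOrbits, Set.mem_ofPred_eq, relDom_inter_relRan_insert hk hm hkm]
  constructor <;> rintro ⟨⟨n, rfl⟩, hO⟩
  · exact ⟨⟨n, horbit n (hO (mem_relOrbit_self _ n))⟩, hO⟩
  · exact ⟨⟨n, (horbit n (hO (mem_relOrbit_self _ n))).symm⟩, hO⟩

end Insert

/-- `(k, m)` can be added to `s` without changing the closed orbits of `s` or the fixed points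
of words whose group letters lie in `L`. -/
def FreshPair (s : Set (ℕ × ℕ)) (L : Set Perm') (k m : ℕ) : Prop :=
  k ∉ pfield s ∧ m ∉ pfield s ∧ k ≠ m ∧
    ∀ g ∈ L, g k ∉ pfield (insert (k, m) s) ∧ g m ∉ pfield (insert (k, m) s)

lemma ZrCond.insert_of_freshPair {G : Subgroup Perm'} {r : ℕ → Fin 2} {s : Set (ℕ × ℕ)}
    {E : Set Word} {k m : ℕ} (hc : ZrCond G r s E) (hf : FreshPair s (wordLetters E) k m) :
    ZrCond G r (insert (k, m) s) E ∧ ZLe (insert (k, m) s) E s E := by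
  obtain ⟨⟨hsfin, hsinj, hEfin, hEnice⟩, hnice, hcodes⟩ := hc
  obtain ⟨hk, hm, hkm, hL⟩ := hf
  have hclosed := relClosedOrbits_insert hk hm hkm
  refine ⟨⟨⟨hsfin.insert _, hsinj.insert (fun h => hk (Or.inl h)) (fun h => hm (Or.inr h)),
      hEfin, hEnice⟩, ?_, ?_⟩, Set.subset_insert _ _, subset_rfl, fun w hw => ?_⟩
  · simpa only [NiceInj, hclosed] using hnice
  · simpa only [CodesReal, orbitIndex, hclosed] using hcodes
  · exact wordFix_insert hk hm hkm (hEnice w hw) fun g hg => hL g ⟨w, hw, hg⟩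

namespace TreePos

variable {P : Set Perm'} {T : Set (List ℕ)} {t : List ℕ}

lemma exists_extension_length_ge (hT : TreePos P T) (ht : t ∈ T) (j : ℕ) :
    ∃ u ∈ T, t <+: u ∧ t.length + j ≤ u.length := by
  induction j with
  | zero => exact ⟨t, ht, List.prefix_rfl, le_rfl⟩
  | succ j ih =>
    obtain ⟨u, hu, htu, hlen⟩ := ih
    obtain ⟨v, hv, huv, i, hi, hiv, -⟩ := hT.2 u hu ∅ (Set.empty_subset _) Set.finite_empty
    exact ⟨v, hv, htu.trans huv, by omega⟩

lemma exists_extension_card_eq (hT : TreePos P T) {P₀ : Set Perm'} (hP₀ : P₀ ⊆ P)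
    (hP₀fin : P₀.Finite) (ht : t ∈ T) (j : ℕ) :
    ∃ u ∈ T, t <+: u ∧ ∃ K : Finset ℕ, K.card = j ∧
      ∀ k ∈ K, t.length ≤ k ∧ k < u.length ∧ ∀ f ∈ P₀, u.getD k 0 ≠ f k := by
  induction j with
  | zero => exact ⟨t, ht, List.prefix_rfl, ∅, rfl, by simp⟩
  | succ j ih =>
    obtain ⟨u, hu, htu, K, hcard, hK⟩ := ih
    obtain ⟨v, hv, ⟨x, rfl⟩, i, hi, hiv, hiP⟩ := hT.2 u hu P₀ hP₀ hP₀fin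
    have hiK : i ∉ K := fun h => absurd (hK i h).2.1 (by omega)
    refine ⟨u ++ x, hv, htu.trans (List.prefix_append u x), insert i K,
      by rw [Finset.card_insert_of_notMem hiK, hcard], fun k hk => ?_⟩
    rcases Finset.mem_insert.1 hk with rfl | hk
    · exact ⟨htu.length_le.trans hi, hiv, hiP⟩
    · obtain ⟨htk, hku, hkP⟩ := hK k hk
      rw [List.getD_append u x 0 k hku, List.length_append]
      exact ⟨htk, by omega, hkP⟩

/-- Since branches of `T` are injective, among `|B| + 1` positions beyond `max B` some value
avoids `B`. -/
lemma exists_extension_avoiding (hT : TreePos P T) {P₀ : Set Perm'} (hP₀ : P₀ ⊆ P)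
    (hP₀fin : P₀.Finite) (ht : t ∈ T) {B : Set ℕ} (hB : B.Finite) :
    ∃ u ∈ T, t <+: u ∧ ∃ k, t.length ≤ k ∧ k < u.length ∧ k ∉ B ∧ u.getD k 0 ∉ B ∧
      ∀ f ∈ P₀, u.getD k 0 ≠ f k := by
  obtain ⟨N, hN⟩ := hB.bddAbove
  obtain ⟨t₀, ht₀, htt₀, hlen⟩ := hT.exists_extension_length_ge ht (N + 1)
  obtain ⟨u, hu, ht₀u, K, hcard, hK⟩ :=
    hT.exists_extension_card_eq hP₀ hP₀fin ht₀ (hB.toFinset.card + 1)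
  obtain ⟨k, hkK, hkB⟩ : ∃ k ∈ K, u.getD k 0 ∉ B := by
    by_contra! hall
    obtain ⟨i, hi, j, hj, hij, heq⟩ := Finset.exists_ne_map_eq_of_card_lt_of_maps_to
      (by omega : hB.toFinset.card < K.card) (f := fun k => u.getD k 0)
      fun k hk => hB.mem_toFinset.2 (hall k hk)
    rw [List.getD_eq_getElem u 0 (hK i hi).2.1, List.getD_eq_getElem u 0 (hK j hj).2.1] at heq
    exact hij (((hT.1.2.2 u hu).getElem_inj_iff).1 heq)
  obtain ⟨ht₀k, hku, hkP⟩ := hK k hkK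
  refine ⟨u, hu, htt₀.trans ht₀u, k, by omega, hku, fun h => ?_, hkB, hkP⟩
  exact absurd (hN h) (by omega)

end TreePos

lemma exists_freshPair {G : Subgroup Perm'} (hG : Cofinitary G) {T : Set (List ℕ)}
    (hT : TreePos (G : Set Perm') T) {t : List ℕ} (ht : t ∈ T) {s : Set (ℕ × ℕ)}
    (hs : s.Finite) {L : Set Perm'} (hL : L.Finite) (hLG : ∀ g ∈ L, g ∈ G ∧ g ≠ 1) :
    ∃ u ∈ T, t <+: u ∧ ∃ k, t.length ≤ k ∧ k < u.length ∧ FreshPair s L k (u.getD k 0) := by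
  have hD : (pfield s).Finite := (hs.image _).union (hs.image _)
  set B := pfield s ∪ ⋃ g ∈ L, (g ⁻¹' pfield s ∪ {n | g n = n})
  have hB : B.Finite := hD.union <| hL.biUnion fun g hg =>
    (hD.preimage g.injective.injOn).union (hG g (hLG g hg).1 (hLG g hg).2)
  have hP₀ : insert 1 (L ∪ L⁻¹) ⊆ (G : Set Perm') := by
    rintro f (rfl | hf | hf)
    · exact G.one_mem
    · exact (hLG f hf).1
    · exact inv_mem_iff.1 (hLG _ hf).1
  obtain ⟨u, hu, htu, k, htk, hku, hkB, hmB, hP⟩ :=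
    hT.exists_extension_avoiding hP₀ ((hL.union hL.inv).insert 1) ht hB
  refine ⟨u, hu, htu, k, htk, hku, fun h => hkB (Or.inl h), fun h => hmB (Or.inl h),
    fun h => hP 1 (Set.mem_insert _ _) h.symm, fun g hg => ⟨?_, ?_⟩⟩ <;>
    rw [mem_pfield_insert] <;> rintro (h | h | h)
  · exact hkB (Or.inr (Set.mem_biUnion hg (Or.inr h)))
  · exact hP g (Or.inr (Or.inl hg)) h.symm
  · exact hkB (Or.inr (Set.mem_biUnion hg (Or.inl h)))
  · exact hP g⁻¹ (Or.inr (Or.inr (Set.inv_mem_inv.2 hg))) (Equiv.Perm.eq_inv_iff_eq.2 h)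
  · exact hmB (Or.inr (Set.mem_biUnion hg (Or.inr h)))
  · exact hmB (Or.inr (Set.mem_biUnion hg (Or.inl h)))

/-- The generic hitting lemma for the coding forcing `Z_G(r)`. -/
theorem statement6 (G : Subgroup Perm') (hG : Cofinitary G) (r : ℕ → Fin 2)
    (T : Set (List ℕ)) (hT : TreePos (G : Set Perm') T)
    (t : List ℕ) (ht : t ∈ T)
    (s : Set (ℕ × ℕ)) (E : Set Word) (hc : ZrCond G r s E) :
    ∃ s' : Set (ℕ × ℕ), ZrCond G r s' E ∧ ZLe s' E s E ∧
      ∃ t' ∈ T, t <+: t' ∧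
        ∃ k : ℕ, t.length ≤ k ∧ k < t'.length ∧ (k, t'.getD k 0) ∈ s' := by
  obtain ⟨hsfin, -, hEfin, hEnice⟩ := hc.1
  obtain ⟨u, hu, htu, k, htk, hku, hfresh⟩ := exists_freshPair hG hT ht hsfin
    (wordLetters_finite hEfin) fun g ⟨w, hw, hg⟩ => (hEnice w hw).mem_of_inl_mem hg
  obtain ⟨hc', hle⟩ := hc.insert_of_freshPair hfresh
  exact ⟨_, hc', hle, u, hu, htu, k, htk, hku, Set.mem_insert _ _⟩

end
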